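/- Under the rotated designation scheme with global offset, for every agent x ∈ {1, …, n}, the total number of coalition value calculations assigned to agent x across all coalition sizes satisfies ⌊(2^n − 1)/n⌋ ≤ |CV_x| ≤ ⌈(2^n − 1)/n⌉, where |CV_x| = A + |{ j : (x − 1 − H_j) mod n < d^{(j)} }| with A = Σ_{s=1}^{n} |A(n,s)|. In particular, the maximum difference in total allocation between any two agents, across all coalition sizes, is at most 1. -/

import Mathlib

/-!
Stars and bars count the increment arrays of size `s` as `C(n-1, s-1)`; counted orbit by
orbit under rotation, the orbit of `t` has `π(t)` elements. Since `s · ϖ(t) = n · π(t)`, the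
strides of the representatives of size `s` add up to `C(n, s)`, and summing over `s` gives
`n · A + D = 2^n - 1`, where `D` is the total stride of the periodic representatives.
The designation test for `t^{(j)}` asks whether the window `[H_j, H_j + d^{(j)})`, of length at
most `n`, contains an integer `≡ x - 1 (mod n)`. These windows tile `[0, D)`, so agent `x` is
designated `⌊(D + n - x) / n⌋` times, a number between `⌊D / n⌋` and `⌈D / n⌉`.
-/

namespace NDCA

/-- `t` is an increment array (IA) of size `s` for `n` agents:
a tuple of non-negative integers of length `s` with sum `n - s`. -/
def IsIA (n s : ℕ) (t : List ℕ) : Prop :=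
  t.length = s ∧ t.sum = n - s

/-- Cumulative increment `φ_i` (1-indexed): `φ_1 = 0`, and
`φ_i = Σ_{k=0}^{i-2} (t_k + 1)` for `2 ≤ i`. -/
def phi (t : List ℕ) (i : ℕ) : ℕ := (t.take (i - 1)).sum + (i - 1)

/-- The coalition generated by increment array `t` from starting agent `x`:
`C(x,t) = { ((x - 1 + φ_i) mod n) + 1 : 1 ≤ i ≤ s }`. -/
def coal (n x : ℕ) (t : List ℕ) : Finset ℕ :=
  (Finset.Icc 1 t.length).image (fun i => (x - 1 + phi t i) % n + 1)

/-- The collection of coalitions generated by `t` as the starting agent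
ranges over `{1, …, n}`. -/
def gen (n : ℕ) (t : List ℕ) : Finset (Finset ℕ) :=
  (Finset.Icc 1 n).image (fun x => coal n x t)

/-- `u` is a circular shift of `t`: `u = ⟨t_k, …, t_{s-1}, t_0, …, t_{k-1}⟩`
for some `0 ≤ k ≤ s - 1`. -/
def ShiftEquiv (t u : List ℕ) : Prop :=
  ∃ k, k < t.length ∧ u = t.rotate k

/-- `p` is a period of `t`: `1 ≤ p`, `p ∣ |t|`, and `t` consists of
`|t|/p` identical copies of its first `p` entries. -/
def IsPeriodOf (t : List ℕ) (p : ℕ) : Prop :=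
  1 ≤ p ∧ p ∣ t.length ∧ t = (List.replicate (t.length / p) (t.take p)).flatten

/-- The period `π(t)`: the smallest `p` that is a period of `t`. -/
noncomputable def period (t : List ℕ) : ℕ := sInf {p | IsPeriodOf t p}

/-- The stride `ϖ(t) = n·π(t)/|t|` of an increment array (its size being its
length). -/
noncomputable def strideG (n : ℕ) (t : List ℕ) : ℕ := n * period t / t.length

/-- Global cumulative offset `H_j = Σ_{i<j} d^{(i)}` over the periodic
canonical IAs of all sizes, enumerated (0-indexed) by the list `L`. -/
noncomputable def offsetG (n : ℕ) (L : List (List ℕ)) (j : ℕ) : ℕ :=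
  ∑ i ∈ Finset.range j, strideG n (L.getD i [])

/-- The number of periodic canonical IAs (across all sizes, enumerated by
`L`) for which agent `x` passes the designation test
`(x - 1 - H_j) mod n < d^{(j)}`. -/
noncomputable def desigCountG (n : ℕ) (L : List (List ℕ)) (x : ℕ) : ℕ :=
  ((Finset.range L.length).filter (fun j =>
    ((x : ℤ) - 1 - (offsetG n L j : ℤ)) % (n : ℤ)
      < (strideG n (L.getD j []) : ℤ))).card

open Finset

section Rotation

variable {α : Type*}

theorem rotate_one_iterate (l : List α) (k : ℕ) :
    (fun l : List α => l.rotate 1)^[k] l = l.rotate k := by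
  induction k with
  | zero => simp
  | succ k ih => rw [Function.iterate_succ_apply', ih, List.rotate_rotate]

theorem isPeriodicPt_rotate_one_iff (l : List α) (k : ℕ) :
    Function.IsPeriodicPt (fun l : List α => l.rotate 1) k l ↔ l.rotate k = l := by
  rw [Function.IsPeriodicPt, Function.IsFixedPt, rotate_one_iterate]

theorem flatten_replicate_rotate_length (b : List α) (q : ℕ) :
    (List.replicate q b).flatten.rotate b.length = (List.replicate q b).flatten := by
  cases q with
  | zero => simp
  | succ q =>
    conv_rhs => rw [List.replicate_succ', List.flatten_concat]
    rw [List.replicate_succ, List.flatten_cons, List.rotate_append_length_eq]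

theorem eq_flatten_replicate_of_rotate_eq {l : List α} {p : ℕ} (hp : p ∣ l.length)
    (h : l.rotate p = l) : l = (List.replicate (l.length / p) (l.take p)).flatten := by
  have hrot : ∀ m, l.rotate (m * p) = l := fun m =>
    (isPeriodicPt_rotate_one_iff l _).1 (((isPeriodicPt_rotate_one_iff l p).2 h).const_mul m)
  suffices htake : ∀ m, m * p ≤ l.length →
      l.take (m * p) = (List.replicate m (l.take p)).flatten by
    have := htake (l.length / p) (Nat.div_mul_le_self _ _)
    rwa [Nat.div_mul_cancel hp, List.take_length] at this
  intro m
  induction m with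
  | zero => simp
  | succ m ih =>
    intro hm
    rw [Nat.succ_mul] at hm
    have hblock : (l.drop (m * p)).take p = l.take p := by
      conv_rhs => rw [← hrot m, List.rotate_eq_drop_append_take (by omega)]
      rw [List.take_append_of_le_length (by simp; omega)]
    rw [Nat.succ_mul, List.take_add, ih (by omega), hblock, List.replicate_succ',
      List.flatten_concat]

end Rotation

theorem isPeriodOf_iff (t : List ℕ) (p : ℕ) :
    IsPeriodOf t p ↔ 1 ≤ p ∧ p ∣ t.length ∧ t.rotate p = t := by
  refine and_congr_right fun hp => and_congr_right fun hdvd => ⟨fun h => ?_, fun h => ?_⟩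
  · by_cases ht : t = []
    · simp [ht]
    have hb : (t.take p).length = p :=
      List.length_take_of_le (Nat.le_of_dvd (List.length_pos_iff.2 ht) hdvd)
    calc t.rotate p
        = (List.replicate (t.length / p) (t.take p)).flatten.rotate (t.take p).length := by
          rw [hb, ← h]
      _ = t := by rw [flatten_replicate_rotate_length, ← h]
  · exact eq_flatten_replicate_of_rotate_eq hdvd h

theorem isPeriodOf_length {t : List ℕ} (ht : t ≠ []) : IsPeriodOf t t.length :=
  (isPeriodOf_iff t _).2 ⟨List.length_pos_iff.2 ht, dvd_rfl, t.rotate_length⟩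

theorem period_isPeriodOf {t : List ℕ} (ht : t ≠ []) : IsPeriodOf t (period t) :=
  Nat.sInf_mem (s := {p | IsPeriodOf t p}) ⟨_, isPeriodOf_length ht⟩

theorem period_le_length {t : List ℕ} (ht : t ≠ []) : period t ≤ t.length :=
  Nat.le_of_dvd (List.length_pos_iff.2 ht) (period_isPeriodOf ht).2.1

theorem period_eq_minimalPeriod {t : List ℕ} (ht : t ≠ []) :
    period t = Function.minimalPeriod (fun l : List ℕ => l.rotate 1) t := by
  set f := fun l : List ℕ => l.rotate 1
  have hlen : Function.IsPeriodicPt f t.length t :=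
    (isPeriodicPt_rotate_one_iff t _).2 t.rotate_length
  have hpos := hlen.minimalPeriod_pos (List.length_pos_iff.2 ht)
  apply le_antisymm
  · refine Nat.sInf_le ((isPeriodOf_iff t _).2 ⟨hpos, hlen.minimalPeriod_dvd, ?_⟩)
    exact (isPeriodicPt_rotate_one_iff t _).1 (Function.isPeriodicPt_minimalPeriod f t)
  · obtain ⟨hp, -, hrot⟩ := (isPeriodOf_iff t _).1 (period_isPeriodOf ht)
    exact Nat.le_of_dvd hp ((isPeriodicPt_rotate_one_iff t _).2 hrot).minimalPeriod_dvd

noncomputable def rotations (t : List ℕ) : Finset (List ℕ) := (range (period t)).image t.rotate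

theorem mem_rotations {t u : List ℕ} (ht : t ≠ []) : u ∈ rotations t ↔ t ~r u := by
  simp only [rotations, mem_image, mem_range, List.IsRotated]
  refine ⟨fun ⟨k, _, hk⟩ => ⟨k, hk⟩, fun ⟨k, hk⟩ => ⟨k % period t, ?_, ?_⟩⟩
  · exact Nat.mod_lt _ (period_isPeriodOf ht).1
  · rw [period_eq_minimalPeriod ht, ← rotate_one_iterate, Function.iterate_mod_minimalPeriod_eq,
      rotate_one_iterate, hk]

theorem card_rotations {t : List ℕ} (ht : t ≠ []) : #(rotations t) = period t := by
  rw [rotations, card_image_of_injOn, card_range]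
  intro i hi j hj hij
  rw [coe_range, period_eq_minimalPeriod ht] at hi hj
  exact Function.iterate_injOn_Iio_minimalPeriod hi hj
    (by simpa only [rotate_one_iterate] using hij)

theorem shiftEquiv_iff_isRotated {t u : List ℕ} (ht : t ≠ []) : ShiftEquiv t u ↔ t ~r u := by
  refine ⟨fun ⟨k, _, hk⟩ => ⟨k, hk.symm⟩, fun ⟨k, hk⟩ => ⟨k % t.length, ?_, ?_⟩⟩
  · exact Nat.mod_lt _ (List.length_pos_iff.2 ht)
  · rw [List.rotate_mod, hk]

theorem card_antidiagonalTuple (k m : ℕ) :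
    #(Finset.Nat.antidiagonalTuple k m) = (k + m - 1).choose m := by
  rw [← piAntidiag_univ_fin_eq_antidiagonalTuple, ← map_sym_eq_piAntidiag, card_map, sym_univ,
    card_univ, Sym.card_sym_eq_choose, Fintype.card_fin]

def iaFinset (n s : ℕ) : Finset (List ℕ) :=
  (Finset.Nat.antidiagonalTuple s (n - s)).image List.ofFn

theorem mem_iaFinset {n s : ℕ} {t : List ℕ} : t ∈ iaFinset n s ↔ IsIA n s t := by
  simp only [iaFinset, mem_image, Finset.Nat.mem_antidiagonalTuple, IsIA]
  constructor
  · rintro ⟨f, hf, rfl⟩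
    exact ⟨List.length_ofFn, by rw [List.sum_ofFn, hf]⟩
  · rintro ⟨rfl, hsum⟩
    refine ⟨fun i => t[i.1], ?_, List.ofFn_getElem⟩
    rw [← List.sum_ofFn, List.ofFn_getElem, hsum]

theorem card_iaFinset {n s : ℕ} (hs : 1 ≤ s) (hsn : s ≤ n) :
    #(iaFinset n s) = (n - 1).choose (s - 1) := by
  rw [iaFinset, card_image_of_injective _ List.ofFn_injective, card_antidiagonalTuple,
    show s + (n - s) - 1 = s - 1 + (n - s) by omega,
    ← Nat.choose_symm_add, show s - 1 + (n - s) = n - 1 by omega]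

theorem IsIA.ne_nil {n s : ℕ} {t : List ℕ} (h : IsIA n s t) (hs : 1 ≤ s) : t ≠ [] := by
  rintro rfl
  have : 0 = s := h.1
  omega

theorem IsIA.isRotated {n s : ℕ} {t u : List ℕ} (h : IsIA n s t) (htu : t ~r u) :
    IsIA n s u := by
  obtain ⟨k, rfl⟩ := htu
  exact ⟨by rw [List.length_rotate, h.1], by rw [(t.rotate_perm k).sum_eq, h.2]⟩

section Representatives

variable {n s : ℕ} {R : Finset (List ℕ)}

theorem iaFinset_eq_biUnion_rotations (hs : 1 ≤ s) (hIA : ∀ t ∈ R, IsIA n s t)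
    (hcomplete : ∀ u, IsIA n s u → ∃ t ∈ R, ShiftEquiv t u) :
    iaFinset n s = R.biUnion rotations := by
  ext u
  rw [mem_iaFinset, mem_biUnion]
  constructor
  · intro hu
    obtain ⟨t, htR, htu⟩ := hcomplete u hu
    have ht := (hIA t htR).ne_nil hs
    exact ⟨t, htR, (mem_rotations ht).2 ((shiftEquiv_iff_isRotated ht).1 htu)⟩
  · rintro ⟨t, htR, hu⟩
    exact (hIA t htR).isRotated ((mem_rotations ((hIA t htR).ne_nil hs)).1 hu)

theorem sum_period_eq_choose (hs : 1 ≤ s) (hsn : s ≤ n) (hIA : ∀ t ∈ R, IsIA n s t)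
    (hdistinct : ∀ t ∈ R, ∀ u ∈ R, ShiftEquiv t u → t = u)
    (hcomplete : ∀ u, IsIA n s u → ∃ t ∈ R, ShiftEquiv t u) :
    ∑ t ∈ R, period t = (n - 1).choose (s - 1) := by
  have hne : ∀ t ∈ R, t ≠ [] := fun t ht => (hIA t ht).ne_nil hs
  rw [← card_iaFinset hs hsn, iaFinset_eq_biUnion_rotations hs hIA hcomplete, card_biUnion]
  · exact sum_congr rfl fun t ht => (card_rotations (hne t ht)).symm
  · intro t ht t' ht' hne'
    refine disjoint_left.2 fun u hu hu' => hne' (hdistinct t ht t' ht' ?_)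
    rw [mem_rotations (hne t ht)] at hu
    rw [mem_rotations (hne t' ht')] at hu'
    exact (shiftEquiv_iff_isRotated (hne t ht)).2 (hu.trans hu'.symm)

end Representatives

section Stride

variable {n s : ℕ} {t : List ℕ}

theorem IsIA.strideG_mul_length (h : IsIA n s t) (hs : 1 ≤ s) (hsn : s ≤ n) :
    strideG n t * s = n * period t := by
  have ht := h.ne_nil hs
  obtain ⟨hp, hdvd, hflat⟩ := period_isPeriodOf ht
  rw [h.1] at hdvd hflat
  set p := period t
  set b := t.take p
  have hb : b.length = p := List.length_take_of_le (h.1 ▸ Nat.le_of_dvd (by omega) hdvd)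
  obtain ⟨q, rfl⟩ := hdvd
  have hsum : t.sum = q * b.sum := by
    rw [hflat, List.sum_flatten, List.map_replicate, List.sum_replicate, smul_eq_mul,
      Nat.mul_div_cancel_left _ (by omega)]
  have hn : n * p = p * q * (b.sum + p) := by
    have := h.2
    rw [show n = t.sum + p * q by omega, hsum]
    ring
  rw [strideG, h.1, hn, Nat.mul_div_cancel_left _ (by positivity)]
  ring

theorem IsIA.strideG_le (h : IsIA n s t) (hs : 1 ≤ s) : strideG n t ≤ n := by
  rw [strideG, h.1]
  have hp : period t ≤ s := h.1 ▸ period_le_length (h.ne_nil hs)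
  exact Nat.div_le_of_le_mul ((Nat.mul_le_mul_left n hp).trans_eq (mul_comm n s))

theorem IsIA.strideG_eq_of_period_eq (h : IsIA n s t) (hs : 1 ≤ s) (hp : period t = s) :
    strideG n t = n := by
  rw [strideG, h.1, hp, Nat.mul_div_cancel _ (by omega)]

theorem sum_strideG_eq_mul_card_add {R : Finset (List ℕ)} (hs : 1 ≤ s)
    (hIA : ∀ t ∈ R, IsIA n s t) :
    ∑ t ∈ R, strideG n t = n * (R.filter (fun t => period t = s)).card
      + ∑ t ∈ R.filter (fun t => period t < s), strideG n t := by
  rw [← sum_filter_add_sum_filter_not R (fun t => period t = s), mul_comm, ← smul_eq_mul,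
    ← sum_const]
  congr 1
  · exact sum_congr rfl fun t ht =>
      (hIA t (mem_filter.1 ht).1).strideG_eq_of_period_eq hs (mem_filter.1 ht).2
  · refine sum_congr (filter_congr fun t ht => ?_) fun _ _ => rfl
    have := (hIA t ht).1 ▸ period_le_length ((hIA t ht).ne_nil hs)
    omega

theorem sum_strideG_eq_choose {R : Finset (List ℕ)} (hs : 1 ≤ s) (hsn : s ≤ n)
    (hIA : ∀ t ∈ R, IsIA n s t) (hdistinct : ∀ t ∈ R, ∀ u ∈ R, ShiftEquiv t u → t = u)
    (hcomplete : ∀ u, IsIA n s u → ∃ t ∈ R, ShiftEquiv t u) :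
    ∑ t ∈ R, strideG n t = n.choose s := by
  apply Nat.eq_of_mul_eq_mul_right (show 0 < s by omega)
  calc (∑ t ∈ R, strideG n t) * s = n * ∑ t ∈ R, period t := by
        rw [sum_mul, mul_sum]
        exact sum_congr rfl fun t ht => (hIA t ht).strideG_mul_length hs hsn
    _ = n.choose s * s := by
        rw [sum_period_eq_choose hs hsn hIA hdistinct hcomplete]
        obtain ⟨n, rfl⟩ := Nat.exists_eq_add_of_le' (hs.trans hsn)
        obtain ⟨s, rfl⟩ := Nat.exists_eq_add_of_le' hs
        exact Nat.add_one_mul_choose_eq n s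

end Stride

theorem sum_Icc_one_choose_eq (n : ℕ) : ∑ s ∈ Icc 1 n, n.choose s = 2 ^ n - 1 := by
  have h : range (n + 1) = insert 0 (Icc 1 n) := by
    ext s
    simp only [mem_range, mem_insert, mem_Icc]
    omega
  rw [← Nat.sum_range_choose, h, sum_insert (by simp), Nat.choose_zero_right]
  omega

theorem offsetG_length_eq_sum {n : ℕ} {L : List (List ℕ)} (hL : L.Nodup) :
    offsetG n L L.length = ∑ t ∈ L.toFinset, strideG n t := by
  rw [offsetG, sum_range, List.sum_toFinset _ hL, ← Fin.sum_univ_fun_getElem]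
  exact sum_congr rfl fun i _ => congrArg _ (List.getD_eq_getElem _ _ i.2)

theorem mul_card_aperiodic_add_offsetG_eq {n : ℕ} (R : ℕ → Finset (List ℕ))
    (hIA : ∀ s ∈ Icc 1 n, ∀ t ∈ R s, IsIA n s t)
    (hdistinct : ∀ s ∈ Icc 1 n, ∀ t ∈ R s, ∀ u ∈ R s, ShiftEquiv t u → t = u)
    (hcomplete : ∀ s ∈ Icc 1 n, ∀ u, IsIA n s u → ∃ t ∈ R s, ShiftEquiv t u)
    (L : List (List ℕ)) (hnd : L.Nodup)
    (hLmem : L.toFinset = (Icc 1 n).biUnion (fun s => (R s).filter (fun t => period t < s))) :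
    n * ∑ s ∈ Icc 1 n, ((R s).filter (fun t => period t = s)).card + offsetG n L L.length
      = 2 ^ n - 1 := by
  have hdisj : Set.PairwiseDisjoint (Icc 1 n : Set ℕ)
      (fun s => (R s).filter (fun t => period t < s)) := by
    intro s hs s' hs' hss'
    refine disjoint_left.2 fun t ht ht' => hss' ?_
    rw [← (hIA s hs t (mem_filter.1 ht).1).1, (hIA s' hs' t (mem_filter.1 ht').1).1]
  rw [← sum_Icc_one_choose_eq, offsetG_length_eq_sum hnd, hLmem, sum_biUnion hdisj, mul_sum,
    ← sum_add_distrib]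
  refine sum_congr rfl fun s hs => ?_
  rw [← sum_strideG_eq_mul_card_add (mem_Icc.1 hs).1 (hIA s hs)]
  exact sum_strideG_eq_choose (mem_Icc.1 hs).1 (mem_Icc.1 hs).2 (hIA s hs) (hdistinct s hs)
    (hcomplete s hs)

theorem ite_emod_lt_eq_ediv_sub_ediv {n d : ℤ} (b : ℤ) (hn : 0 < n) (hd : 0 ≤ d)
    (hdn : d ≤ n) :
    (if b % n < d then 1 else 0 : ℤ) = (n - 1 - b + d) / n - (n - 1 - b) / n := by
  have hb := Int.emod_add_mul_ediv b n
  have h0 := Int.emod_nonneg b hn.ne'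
  have hlt := Int.emod_lt_of_pos b hn
  have hdiv : ∀ a q r : ℤ, r + n * q = a → 0 ≤ r → r < n → a / n = q :=
    fun a q r h1 h2 h3 => ((Int.ediv_emod_unique hn).2 ⟨h1, h2, h3⟩).1
  rw [hdiv (n - 1 - b) (-(b / n)) (n - 1 - b % n) (by linarith) (by linarith) (by linarith)]
  split_ifs with h
  · rw [hdiv (n - 1 - b + d) (1 - b / n) (d - 1 - b % n) (by linarith) (by linarith)
      (by linarith)]
    ring
  · rw [hdiv (n - 1 - b + d) (-(b / n)) (n - 1 - b % n + d) (by linarith) (by linarith)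
      (by linarith)]
    ring

theorem desigCountG_eq {n : ℕ} (hn : 1 ≤ n) {L : List (List ℕ)}
    (hL : ∀ t ∈ L, strideG n t ≤ n) {x : ℕ} (hx1 : 1 ≤ x) (hxn : x ≤ n) :
    desigCountG n L x = (offsetG n L L.length + n - x) / n := by
  set g : ℕ → ℤ := fun j => ((offsetG n L j : ℤ) + n - x) / n
  have hstep : ∀ j ∈ range L.length,
      (if ((x : ℤ) - 1 - offsetG n L j) % n < strideG n (L.getD j []) then 1 else 0 : ℤ)
        = g (j + 1) - g j := by
    intro j hj
    have hd : strideG n (L.getD j []) ≤ n :=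
      hL _ (List.getD_eq_getElem _ _ (mem_range.1 hj) ▸ List.getElem_mem _)
    rw [ite_emod_lt_eq_ediv_sub_ediv _ (by omega) (by omega) (by exact_mod_cast hd)]
    simp only [g, offsetG, sum_range_succ]
    push_cast
    ring_nf
  have hg0 : g 0 = 0 := Int.ediv_eq_zero_of_lt (by simp [offsetG]; omega) (by simp [offsetG]; omega)
  have hcount : (desigCountG n L x : ℤ) = g L.length := by
    rw [desigCountG, card_filter, Nat.cast_sum, ← sub_zero (g _), ← hg0, ← sum_range_sub]
    push_cast
    exact sum_congr rfl hstep
  rw [← Int.ofNat_inj, hcount, Int.natCast_ediv, Nat.cast_sub (by omega)]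
  push_cast
  rfl

/-- **aggregate load balance.**  For each size `s`, let `R s`
contain one representative of each `≈`-class of size-`s` increment arrays,
and let `L` enumerate (in a fixed order, without repetition) the periodic
ones across all sizes.  Under the rotated designation scheme with global
offset, each agent `x ∈ {1,…,n}` receives in total
`|CV_x| = A + #{j : (x-1-H_j) mod n < d^{(j)}}` coalitions, where
`A = Σ_{s=1}^{n} |A(n,s)|`, and
`⌊(2^n - 1)/n⌋ ≤ |CV_x| ≤ ⌈(2^n - 1)/n⌉`; in particular the total
allocations of any two agents differ by at most 1. -/
theorem stmt16 (n : ℕ) (hn : 1 ≤ n)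
    (R : ℕ → Finset (List ℕ))
    (hIA : ∀ s ∈ Finset.Icc 1 n, ∀ t ∈ R s, IsIA n s t)
    (hdistinct : ∀ s ∈ Finset.Icc 1 n, ∀ t ∈ R s, ∀ u ∈ R s,
      ShiftEquiv t u → t = u)
    (hcomplete : ∀ s ∈ Finset.Icc 1 n, ∀ u, IsIA n s u →
      ∃ t ∈ R s, ShiftEquiv t u)
    (L : List (List ℕ)) (hnd : L.Nodup)
    (hLmem : L.toFinset =
      (Finset.Icc 1 n).biUnion (fun s => (R s).filter (fun t => period t < s))) :
    ∀ x ∈ Finset.Icc 1 n,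
      (2 ^ n - 1) / n
          ≤ (∑ s ∈ Finset.Icc 1 n, ((R s).filter (fun t => period t = s)).card)
              + desigCountG n L x ∧
      (∑ s ∈ Finset.Icc 1 n, ((R s).filter (fun t => period t = s)).card)
              + desigCountG n L x
          ≤ ((2 ^ n - 1) + n - 1) / n ∧
      ∀ y ∈ Finset.Icc 1 n,
        (∑ s ∈ Finset.Icc 1 n, ((R s).filter (fun t => period t = s)).card)
            + desigCountG n L x
          ≤ ((∑ s ∈ Finset.Icc 1 n,
                ((R s).filter (fun t => period t = s)).card)
              + desigCountG n L y) + 1 := by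
  have hid := mul_card_aperiodic_add_offsetG_eq R hIA hdistinct hcomplete L hnd hLmem
  have hstride : ∀ t ∈ L, strideG n t ≤ n := by
    intro t ht
    obtain ⟨s, hs, ht⟩ := mem_biUnion.1 (hLmem ▸ List.mem_toFinset.2 ht)
    exact (hIA s hs t (mem_filter.1 ht).1).strideG_le (mem_Icc.1 hs).1
  have hcount : ∀ y ∈ Icc 1 n, desigCountG n L y = (offsetG n L L.length + n - y) / n :=
    fun y hy => desigCountG_eq hn hstride (mem_Icc.1 hy).1 (mem_Icc.1 hy).2
  generalize offsetG n L L.length = D at hid hcount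
  generalize ∑ s ∈ Icc 1 n, ((R s).filter (fun t => period t = s)).card = A at hid ⊢
  intro x hx
  obtain ⟨hx1, hxn⟩ := mem_Icc.1 hx
  rw [hcount x hx]
  refine ⟨?_, ?_, fun y hy => ?_⟩
  · rw [← hid, Nat.mul_add_div (by omega)]
    exact Nat.add_le_add_left (Nat.div_le_div_right (by omega)) A
  · rw [show 2 ^ n - 1 + n - 1 = n * A + (D + n - 1) by omega, Nat.mul_add_div (by omega)]
    exact Nat.add_le_add_left (Nat.div_le_div_right (by omega)) A
  · rw [hcount y hy, add_assoc, ← Nat.add_div_right (D + n - y) (by omega : 0 < n)]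
    have hyn := (mem_Icc.1 hy).2
    exact Nat.add_le_add_left (Nat.div_le_div_right (by omega)) A

end NDCA
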